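/- Let R satisfy (H1), a ∈ ℝ₊ᵈ, and fix n ≥ 1. For the solution of SP({a+Σu_n}, R): Δy_n^{(a)} ≫ 0 (all components strictly positive) if and only if −R⁻¹u_n ≫ R⁻¹z_{n−1}^{(a)}, if and only if −R⁻¹a + Σ_{ℓ=1}^n(−R⁻¹u_ℓ) ≫ y_{n−1}^{(a)}. -/

import Mathlib

open Matrix Finset MeasureTheory ProbabilityTheory

noncomputable section

/-- A pair `(ξ, ζ)` solves the linear complementarity problem `LCP(η, M)`. -/
def IsLCPSol {d : ℕ} (M : Matrix (Fin d) (Fin d) ℝ) (η ξ ζ : Fin d → ℝ) : Prop :=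
  ζ = η + M *ᵥ ξ ∧ (∀ i, 0 ≤ ξ i) ∧ (∀ i, 0 ≤ ζ i) ∧ ξ ⬝ᵥ ζ = 0

/-- `(y, z)` solves the Skorokhod problem `SP({a + Σ u_n}, M)` in the orthant. -/
def IsSPSol {d : ℕ} (M : Matrix (Fin d) (Fin d) ℝ) (a : Fin d → ℝ)
    (u y z : ℕ → Fin d → ℝ) : Prop :=
  y 0 = 0 ∧ z 0 = a ∧
  ∀ n, 1 ≤ n →
    z n = z (n - 1) + u n + M *ᵥ (y n - y (n - 1)) ∧
    (∀ i, 0 ≤ z n i) ∧ (∀ i, 0 ≤ y n i - y (n - 1) i) ∧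
    z n ⬝ᵥ (y n - y (n - 1)) = 0

/-! Write `M = 1 - Pᵀ`. Each step of the Skorokhod problem is the complementarity problem
`LCP(z_{n-1} + u_n, M)` for the increment `Δy_n`, so `Δy_n = M⁻¹ z_n - M⁻¹ (z_{n-1} + u_n)`.
As `M⁻¹ ≥ 0` entrywise and `z_n ≥ 0`, `Δy_n ≫ 0` forces `z_n = 0` by complementarity, and
conversely `M⁻¹ (z_{n-1} + u_n) ≪ 0` gives `Δy_n ≫ 0`. The second form follows by telescoping
`z_m = a + Σ_{ℓ ≤ m} u_ℓ + M y_m`.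

For `M⁻¹ ≥ 0`: `spectralRadius ℝ P` only sees the real spectrum, so the Neumann series of `P`
need not converge. Instead `1 - t • P` is invertible for every `t ∈ [0, 1]`, and nonnegativity
of `(1 - t • P)⁻¹` spreads from `t = 0` to `t = 1` by continuous induction, each small step
being a convergent Neumann series `(A - s • Q)⁻¹ = (1 - s • A⁻¹ Q)⁻¹ A⁻¹`. -/

open Topology

theorem isUnit_one_sub_smul_of_spectralRadius_lt_one {𝕜 A : Type*} [NormedField 𝕜] [Ring A]
    [Algebra 𝕜 A] {a : A} (ha : spectralRadius 𝕜 a < 1) {t : 𝕜} (ht : ‖t‖ ≤ 1) :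
    IsUnit (1 - t • a) := by
  rcases eq_or_ne t 0 with rfl | ht0
  · simp
  have hres : t⁻¹ ∈ resolventSet 𝕜 a := by
    refine spectrum.mem_resolventSet_of_spectralRadius_lt (ha.trans_le ?_)
    rw [ENNReal.one_le_coe_iff, nnnorm_inv]
    exact (one_le_inv₀ (nnnorm_pos.2 ht0)).2 ht
  have hfactor : 1 - t • a = algebraMap 𝕜 A t * (algebraMap 𝕜 A t⁻¹ - a) := by
    rw [mul_sub, ← map_mul, mul_inv_cancel₀ ht0, map_one, Algebra.smul_def]
  rw [hfactor]
  exact (ht0.isUnit.map _).mul hres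

namespace Matrix

variable {ι : Type*} [Fintype ι]

lemma mul_apply_nonneg {m o R : Type*} [Semiring R] [PartialOrder R] [IsOrderedRing R]
    {A : Matrix m ι R} {B : Matrix ι o R} (hA : ∀ i j, 0 ≤ A i j) (hB : ∀ i j, 0 ≤ B i j) :
    ∀ i j, 0 ≤ (A * B) i j :=
  fun i j => Finset.sum_nonneg fun l _ => mul_nonneg (hA i l) (hB l j)

lemma mulVec_apply_nonneg {m R : Type*} [Semiring R] [PartialOrder R] [IsOrderedRing R]
    {A : Matrix m ι R} {x : ι → R} (hA : ∀ i j, 0 ≤ A i j) (hx : ∀ j, 0 ≤ x j) :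
    ∀ i, 0 ≤ (A *ᵥ x) i :=
  fun i => Finset.sum_nonneg fun j _ => mul_nonneg (hA i j) (hx j)

section LinftyOpNorm

attribute [local instance] Matrix.linftyOpNormedRing Matrix.linftyOpNormedAlgebra

variable [DecidableEq ι]

lemma inv_one_sub_nonneg_of_norm_lt_one {B : Matrix ι ι ℝ} (hB : ∀ i j, 0 ≤ B i j)
    (hnorm : ‖B‖ < 1) : ∀ i j, 0 ≤ (1 - B)⁻¹ i j := by
  intro i j
  have hsum : HasSum (fun k : ℕ => B ^ k) (1 - B)⁻¹ := by
    rw [nonsing_inv_eq_ringInverse]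
    exact hasSum_geom_series_inverse B hnorm
  exact hasSum_le (fun k => pow_apply_nonneg hB k i j) hasSum_zero
    (Pi.hasSum.mp (Pi.hasSum.mp hsum i) j)

lemma exists_inv_sub_smul_nonneg {A Q : Matrix ι ι ℝ} (hA : IsUnit A.det)
    (hAinv : ∀ i j, 0 ≤ A⁻¹ i j) (hQ : ∀ i j, 0 ≤ Q i j) :
    ∃ δ > (0 : ℝ), ∀ s ∈ Set.Ico 0 δ, ∀ i j, 0 ≤ (A - s • Q)⁻¹ i j := by
  refine ⟨1 / (‖A⁻¹ * Q‖ + 1), by positivity, fun s hs => ?_⟩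
  have hB : ∀ i j, 0 ≤ (s • (A⁻¹ * Q)) i j := fun i j =>
    mul_nonneg hs.1 (mul_apply_nonneg hAinv hQ i j)
  have hnorm : ‖s • (A⁻¹ * Q)‖ < 1 := by
    rw [norm_smul, Real.norm_of_nonneg hs.1]
    have hs2 := (lt_div_iff₀ (by positivity)).mp hs.2
    nlinarith [norm_nonneg (A⁻¹ * Q)]
  have hfactor : A - s • Q = A * (1 - s • (A⁻¹ * Q)) := by
    rw [Matrix.mul_sub, Matrix.mul_one, Matrix.mul_smul, mul_nonsing_inv_cancel_left _ _ hA]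
  rw [hfactor, mul_inv_rev]
  exact mul_apply_nonneg (inv_one_sub_nonneg_of_norm_lt_one hB hnorm) hAinv

end LinftyOpNorm

variable [DecidableEq ι]

lemma inv_one_sub_nonneg_of_forall_isUnit {Q : Matrix ι ι ℝ} (hQ : ∀ i j, 0 ≤ Q i j)
    (hunit : ∀ t ∈ Set.Icc (0 : ℝ) 1, IsUnit (1 - t • Q)) : ∀ i j, 0 ≤ (1 - Q)⁻¹ i j := by
  set S : Set ℝ := {t | ∀ i j, 0 ≤ (1 - t • Q)⁻¹ i j}
  have hdet : ∀ t ∈ Set.Icc (0 : ℝ) 1, IsUnit (1 - t • Q).det := fun t ht =>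
    (isUnit_iff_isUnit_det _).mp (hunit t ht)
  have hcont : ContinuousOn (fun t : ℝ => (1 - t • Q)⁻¹) (Set.Icc 0 1) := by
    intro t ht
    refine (continuousAt_matrix_inv _ ?_).comp_continuousWithinAt (by fun_prop)
    rw [Ring.inverse_eq_inv']
    exact continuousAt_inv₀ (hdet t ht).ne_zero
  have hclosed : IsClosed (S ∩ Set.Icc 0 1) := by
    have hnonneg : IsClosed {A : Matrix ι ι ℝ | ∀ i j, 0 ≤ A i j} := by
      simp only [Set.ofPred_forall]
      exact isClosed_iInter fun i => isClosed_iInter fun j =>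
        isClosed_le continuous_const (continuous_apply_apply i j)
    rw [Set.inter_comm]
    exact hcont.preimage_isClosed_of_isClosed isClosed_Icc hnonneg
  have hstep : ∀ t ∈ S ∩ Set.Ico 0 1, S ∈ 𝓝[>] t := by
    rintro t ⟨htS, ht⟩
    obtain ⟨δ, hδ, hδS⟩ :=
      exists_inv_sub_smul_nonneg (hdet t (Set.Ico_subset_Icc_self ht)) htS hQ
    refine Filter.mem_of_superset (Ioo_mem_nhdsGT (lt_add_of_pos_right t hδ)) fun s hs => ?_
    have := hδS (s - t) ⟨by linarith [hs.1], by linarith [hs.2]⟩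
    rwa [sub_sub, ← add_smul, add_sub_cancel] at this
  have h0 : (0 : ℝ) ∈ S := by simpa [S] using pow_apply_nonneg hQ 0
  simpa [S] using hclosed.Icc_subset_of_forall_mem_nhdsWithin h0 hstep ⟨zero_le_one, le_rfl⟩

lemma inv_one_sub_nonneg_of_spectralRadius_lt_one {Q : Matrix ι ι ℝ} (hQ : ∀ i j, 0 ≤ Q i j)
    (hρ : spectralRadius ℝ Q < 1) : ∀ i j, 0 ≤ (1 - Q)⁻¹ i j :=
  inv_one_sub_nonneg_of_forall_isUnit hQ fun t ht =>
    isUnit_one_sub_smul_of_spectralRadius_lt_one hρ (by rw [Real.norm_of_nonneg ht.1]; exact ht.2)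

end Matrix

namespace IsLCPSol

variable {d : ℕ} {M : Matrix (Fin d) (Fin d) ℝ} {η ξ ζ : Fin d → ℝ}

lemma pos_iff_inv_mulVec_neg (h : IsLCPSol M η ξ ζ) (hM : IsUnit M.det)
    (hMinv : ∀ i j, 0 ≤ M⁻¹ i j) : (∀ i, 0 < ξ i) ↔ ∀ i, (M⁻¹ *ᵥ η) i < 0 := by
  obtain ⟨hζ, hξ, hζ_nonneg, hcompl⟩ := h
  have hξ_eq : ξ = M⁻¹ *ᵥ ζ - M⁻¹ *ᵥ η := by
    rw [hζ, mulVec_add, mulVec_mulVec, nonsing_inv_mul _ hM, one_mulVec, add_sub_cancel_left]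
  constructor
  · intro hpos i
    have hζ0 : ζ = 0 := by
      funext j
      have hterm := (sum_eq_zero_iff_of_nonneg fun k _ => mul_nonneg (hξ k) (hζ_nonneg k)).mp
        hcompl j (mem_univ j)
      exact (mul_eq_zero.mp hterm).resolve_left (hpos j).ne'
    simpa [hξ_eq, hζ0] using hpos i
  · intro hneg i
    have := mulVec_apply_nonneg hMinv hζ_nonneg i
    rw [hξ_eq, Pi.sub_apply]
    linarith [hneg i]

end IsLCPSol

namespace IsSPSol

variable {d : ℕ} {M : Matrix (Fin d) (Fin d) ℝ} {a : Fin d → ℝ} {u y z : ℕ → Fin d → ℝ}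

lemma isLCPSol_increment (h : IsSPSol M a u y z) {n : ℕ} (hn : 1 ≤ n) :
    IsLCPSol M (z (n - 1) + u n) (y n - y (n - 1)) (z n) := by
  obtain ⟨hz, hz_nonneg, hΔ_nonneg, hcompl⟩ := h.2.2 n hn
  exact ⟨by rw [hz, add_assoc], hΔ_nonneg, hz_nonneg, by rwa [dotProduct_comm]⟩

lemma eq_add_sum_add_mulVec (h : IsSPSol M a u y z) (m : ℕ) :
    z m = a + ∑ ℓ ∈ Icc 1 m, u ℓ + M *ᵥ y m := by
  induction m with
  | zero => simp [h.1, h.2.1]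
  | succ m ih =>
    have hstep := (h.2.2 (m + 1) (Nat.le_add_left 1 m)).1
    rw [Nat.add_sub_cancel] at hstep
    rw [hstep, ih, sum_Icc_succ_top (Nat.le_add_left 1 m), mulVec_sub]
    abel

lemma inv_mulVec_eq (h : IsSPSol M a u y z) (hM : IsUnit M.det) (m : ℕ) :
    M⁻¹ *ᵥ z m = M⁻¹ *ᵥ a + ∑ ℓ ∈ Icc 1 m, M⁻¹ *ᵥ u ℓ + y m := by
  rw [h.eq_add_sum_add_mulVec m, mulVec_add, mulVec_add, mulVec_sum, mulVec_mulVec,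
    nonsing_inv_mul _ hM, one_mulVec]

end IsSPSol

theorem stmt_7_general {d : ℕ} (P : Matrix (Fin d) (Fin d) ℝ)
    (hnonneg : ∀ i j, 0 ≤ P i j)
    (hspec : spectralRadius ℝ P < 1)
    (a : Fin d → ℝ) (u y z : ℕ → Fin d → ℝ)
    (hSP : IsSPSol (1 - Pᵀ) a u y z) (n : ℕ) (hn : 1 ≤ n) :
    ((∀ i, 0 < y n i - y (n - 1) i) ↔
      ∀ i, ((1 - Pᵀ)⁻¹ *ᵥ z (n - 1)) i < -(((1 - Pᵀ)⁻¹ *ᵥ u n) i)) ∧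
    ((∀ i, 0 < y n i - y (n - 1) i) ↔
      ∀ i, y (n - 1) i <
        -(((1 - Pᵀ)⁻¹ *ᵥ a) i) + ∑ ℓ ∈ Finset.Icc 1 n, -(((1 - Pᵀ)⁻¹ *ᵥ u ℓ) i)) := by
  have hdet : IsUnit (1 - Pᵀ).det := by
    rw [← transpose_one, ← transpose_sub, det_transpose, ← isUnit_iff_isUnit_det]
    simpa using isUnit_one_sub_smul_of_spectralRadius_lt_one hspec (t := (1 : ℝ)) (by simp)
  have hinv : ∀ i j, 0 ≤ (1 - Pᵀ)⁻¹ i j := by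
    rw [← transpose_one, ← transpose_sub, ← transpose_nonsing_inv]
    exact fun i j => inv_one_sub_nonneg_of_spectralRadius_lt_one hnonneg hspec j i
  have hpos_iff := (hSP.isLCPSol_increment hn).pos_iff_inv_mulVec_neg hdet hinv
  obtain ⟨k, rfl⟩ : ∃ k, n = k + 1 := ⟨n - 1, by omega⟩
  simp only [Nat.add_sub_cancel, mulVec_add, Pi.add_apply] at hpos_iff ⊢
  refine ⟨hpos_iff.trans (forall_congr' fun i => ?_), hpos_iff.trans (forall_congr' fun i => ?_)⟩
  · constructor <;> intro <;> linarith
  · rw [hSP.inv_mulVec_eq hdet, sum_Icc_succ_top (Nat.le_add_left 1 k), sum_neg_distrib]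
    simp only [Pi.add_apply, Finset.sum_apply]
    constructor <;> intro <;> linarith

theorem stmt_7 {d : ℕ} (P : Matrix (Fin d) (Fin d) ℝ)
    (hdiag : ∀ i, P i i = 0) (hnonneg : ∀ i j, 0 ≤ P i j)
    (hspec : spectralRadius ℝ P < 1)
    (a : Fin d → ℝ) (ha : ∀ i, 0 ≤ a i) (u y z : ℕ → Fin d → ℝ)
    (hSP : IsSPSol (1 - Pᵀ) a u y z) (n : ℕ) (hn : 1 ≤ n) :
    ((∀ i, 0 < y n i - y (n - 1) i) ↔
      ∀ i, ((1 - Pᵀ)⁻¹ *ᵥ z (n - 1)) i < -(((1 - Pᵀ)⁻¹ *ᵥ u n) i)) ∧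
    ((∀ i, 0 < y n i - y (n - 1) i) ↔
      ∀ i, y (n - 1) i <
        -(((1 - Pᵀ)⁻¹ *ᵥ a) i) + ∑ ℓ ∈ Finset.Icc 1 n, -(((1 - Pᵀ)⁻¹ *ᵥ u ℓ) i)) :=
  stmt_7_general P hnonneg hspec a u y z hSP n hn

end
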